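/- arXiv:0805.3824 — 3 statements merged into one kernel-verified Lean document; each statement's English description precedes it below -/
import Mathlib

section
/- Let ρ ∈ ℕ with N ≥ n. The noncoherent discrepancy function Δ_ρ is normal: for all X, X' ∈ 𝔽_q^{n×m} and every integer i with 0 ≤ i ≤ δ_ρ(X,X'), there exists Y ∈ 𝔽_q^{N×m} such that Δ_ρ(X,Y) = i and Δ_ρ(X',Y) = δ_ρ(X,X') − i. -/
/-! Take `Y₀` attaining `δ = δ_ρ(X,X')` and `A, A'` attaining `Δ_ρ(X,Y₀)` and `Δ_ρ(X',Y₀)`; then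
`D = A'X' − AX = (Y₀ − AX) − (Y₀ − A'X')` has rank at most `δ`. Writing `D` as a sum of `rank D`
rank-one matrices and letting `E` be the sum of `i` of them, `Y = AX + E` satisfies
`Δ_ρ(X,Y) ≤ rank E ≤ i` and `Δ_ρ(X',Y) ≤ rank (D − E) ≤ δ − i`. As `δ ≤ Δ_ρ(X,Y) + Δ_ρ(X',Y)`,
both inequalities are equalities. -/

/-- The noncoherent discrepancy
`Δ_ρ(X,Y) = min { rank (Y − AX) : A ∈ 𝔽_q^{N×n}, rank A ≥ n − ρ }`. -/
noncomputable def discRho {K : Type*} [Field K] [Fintype K] {n m N : ℕ}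
    (ρ : ℕ) (X : Matrix (Fin n) (Fin m) K) (Y : Matrix (Fin N) (Fin m) K) : ℕ :=
  sInf {r : ℕ | ∃ A : Matrix (Fin N) (Fin n) K, n - ρ ≤ A.rank ∧ r = (Y - A * X).rank}

/-- The Δ-distance `δ_ρ(X,X') = min_Y (Δ_ρ(X,Y) + Δ_ρ(X',Y))`. -/
noncomputable def deltaRho {K : Type*} [Field K] [Fintype K] {n m N : ℕ}
    (ρ : ℕ) (X X' : Matrix (Fin n) (Fin m) K) : ℕ :=
  sInf {e : ℕ | ∃ Y : Matrix (Fin N) (Fin m) K, e = discRho ρ X Y + discRho ρ X' Y}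

namespace Matrix

variable {K : Type*} [Field K] {l m n : Type*} [Fintype n]

theorem rank_neg (A : Matrix m n K) : (-A).rank = A.rank := by
  have : (-A).mulVecLin = -A.mulVecLin := by ext; simp
  rw [rank, rank, this, LinearMap.range_neg]

theorem rank_add_le (A B : Matrix m n K) : (A + B).rank ≤ A.rank + B.rank := by
  rw [rank, rank, rank, mulVecLin_add]
  exact (Submodule.finrank_mono (LinearMap.range_add_le _ _)).trans
    (Submodule.finrank_add_le_finrank_add_finrank _ _)

theorem rank_sub_le (A B : Matrix m n K) : (A - B).rank ≤ A.rank + B.rank := by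
  simpa only [sub_eq_add_neg, rank_neg] using rank_add_le A (-B)

theorem rank_sum_le {ι : Type*} (s : Finset ι) (A : ι → Matrix m n K) :
    (∑ k ∈ s, A k).rank ≤ ∑ k ∈ s, (A k).rank :=
  Finset.le_sum_of_subadditive (fun B : Matrix m n K => B.rank) rank_zero.le rank_add_le s A

theorem rank_sum_vecMulVec_le {ι : Type*} (s : Finset ι) (u : ι → m → K) (v : ι → n → K) :
    (∑ k ∈ s, vecMulVec (u k) (v k)).rank ≤ s.card :=
  (rank_sum_le s _).trans <| by
    simpa using Finset.sum_le_sum fun k _ => rank_vecMulVec_le (u k) (v k)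

theorem exists_eq_sum_vecMulVec (D : Matrix m n K) :
    ∃ (u : Fin D.rank → m → K) (v : Fin D.rank → n → K), D = ∑ k, vecMulVec (u k) (v k) := by
  classical
  let b : Module.Basis (Fin D.rank) K (LinearMap.range D.mulVecLin) :=
    Module.finBasisOfFinrankEq K _ rfl
  have hcol : ∀ j, (fun i => D i j) ∈ LinearMap.range D.mulVecLin := fun j =>
    ⟨Pi.single j 1, by ext; simp [mulVec_single]⟩
  refine ⟨fun k => b k, fun k j => b.repr ⟨_, hcol j⟩ k, ?_⟩
  ext i j
  have hij := congr_fun (congr_arg Subtype.val (b.sum_repr ⟨_, hcol j⟩)) i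
  simp only [AddSubmonoidClass.coe_finsetSum, SetLike.val_smul, Finset.sum_apply, Pi.smul_apply,
    smul_eq_mul] at hij
  simp only [sum_apply, vecMulVec_apply, ← hij, mul_comm]

theorem exists_rank_le_and_rank_sub_le (D : Matrix m n K) (i : ℕ) :
    ∃ E : Matrix m n K, E.rank ≤ i ∧ (D - E).rank ≤ D.rank - i := by
  classical
  obtain ⟨u, v, hD⟩ := D.exists_eq_sum_vecMulVec
  obtain ⟨t, -, ht⟩ := Finset.exists_subset_card_eq
    (show min i D.rank ≤ (Finset.univ : Finset (Fin D.rank)).card by simp)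
  refine ⟨∑ k ∈ t, vecMulVec (u k) (v k), ?_, ?_⟩
  · exact (rank_sum_vecMulVec_le t u v).trans (ht ▸ min_le_left _ _)
  · have hrest : D - ∑ k ∈ t, vecMulVec (u k) (v k) =
        ∑ k ∈ Finset.univ \ t, vecMulVec (u k) (v k) := by
      rw [Finset.sum_sdiff_eq_sub (Finset.subset_univ t), ← hD]
    rw [hrest]
    refine (rank_sum_vecMulVec_le _ u v).trans ?_
    rw [Finset.card_sdiff_of_subset (Finset.subset_univ t), Finset.card_univ, Fintype.card_fin, ht]
    omega

theorem rank_one_submatrix_id_of_injective [Fintype l] [Fintype m] [DecidableEq l] [DecidableEq m]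
    {e : l → m} (he : Function.Injective e) :
    ((1 : Matrix m m K).submatrix id e).rank = Fintype.card l := by
  refine le_antisymm (rank_le_card_width _) ?_
  calc Fintype.card l = (1 : Matrix l l K).rank := rank_one.symm
    _ = ((1 : Matrix m m K).submatrix e id * (1 : Matrix m m K).submatrix id e).rank := by
      rw [← submatrix_mul _ _ _ _ _ Function.bijective_id, one_mul, submatrix_one e he]
    _ ≤ _ := rank_mul_le_right _ _

theorem exists_rank_eq_width {N n : ℕ} (h : n ≤ N) : ∃ A : Matrix (Fin N) (Fin n) K, A.rank = n :=
  ⟨_, by simpa using rank_one_submatrix_id_of_injective (K := K) (Fin.castLE_injective h)⟩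

end Matrix

section Discrepancy

variable {K : Type*} [Field K] [Fintype K] {n m N : ℕ} (ρ : ℕ)

theorem discRho_le_rank (X : Matrix (Fin n) (Fin m) K) (Y : Matrix (Fin N) (Fin m) K)
    {A : Matrix (Fin N) (Fin n) K} (hA : n - ρ ≤ A.rank) :
    discRho ρ X Y ≤ (Y - A * X).rank := by
  unfold discRho
  exact Nat.sInf_le ⟨A, hA, rfl⟩

theorem exists_discRho_eq_rank (hnN : n ≤ N) (X : Matrix (Fin n) (Fin m) K)
    (Y : Matrix (Fin N) (Fin m) K) :
    ∃ A : Matrix (Fin N) (Fin n) K, n - ρ ≤ A.rank ∧ discRho ρ X Y = (Y - A * X).rank := by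
  obtain ⟨A₀, hA₀⟩ := Matrix.exists_rank_eq_width (K := K) hnN
  exact Nat.sInf_mem
    (s := {r | ∃ A : Matrix (Fin N) (Fin n) K, n - ρ ≤ A.rank ∧ r = (Y - A * X).rank})
    ⟨_, A₀, hA₀.symm ▸ Nat.sub_le n ρ, rfl⟩

theorem deltaRho_le_add (X X' : Matrix (Fin n) (Fin m) K) (Y : Matrix (Fin N) (Fin m) K) :
    deltaRho (N := N) ρ X X' ≤ discRho ρ X Y + discRho ρ X' Y := by
  unfold deltaRho
  exact Nat.sInf_le ⟨Y, rfl⟩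

theorem exists_deltaRho_eq_add (X X' : Matrix (Fin n) (Fin m) K) :
    ∃ Y : Matrix (Fin N) (Fin m) K, deltaRho (N := N) ρ X X' = discRho ρ X Y + discRho ρ X' Y :=
  Nat.sInf_mem (s := {e | ∃ Y : Matrix (Fin N) (Fin m) K, e = discRho ρ X Y + discRho ρ X' Y})
    ⟨_, 0, rfl⟩

theorem exists_rank_sub_le_deltaRho (hnN : n ≤ N) (X X' : Matrix (Fin n) (Fin m) K) :
    ∃ A A' : Matrix (Fin N) (Fin n) K, n - ρ ≤ A.rank ∧ n - ρ ≤ A'.rank ∧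
      (A' * X' - A * X).rank ≤ deltaRho (N := N) ρ X X' := by
  obtain ⟨Y, hY⟩ := exists_deltaRho_eq_add (N := N) ρ X X'
  obtain ⟨A, hA, hAY⟩ := exists_discRho_eq_rank ρ hnN X Y
  obtain ⟨A', hA', hA'Y⟩ := exists_discRho_eq_rank ρ hnN X' Y
  refine ⟨A, A', hA, hA', ?_⟩
  calc (A' * X' - A * X).rank = ((Y - A * X) - (Y - A' * X')).rank := by congr 1; abel
    _ ≤ (Y - A * X).rank + (Y - A' * X').rank := Matrix.rank_sub_le _ _
    _ = deltaRho (N := N) ρ X X' := by rw [hY, hAY, hA'Y]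

end Discrepancy

theorem discRho_isNormal_general {K : Type*} [Field K] [Fintype K] {n m N : ℕ}
    (hnN : n ≤ N) (ρ : ℕ)
    (X X' : Matrix (Fin n) (Fin m) K) (i : ℕ)
    (hi : i ≤ deltaRho (N := N) ρ X X') :
    ∃ Y : Matrix (Fin N) (Fin m) K,
      discRho ρ X Y = i ∧ discRho ρ X' Y = deltaRho (N := N) ρ X X' - i := by
  obtain ⟨A, A', hA, hA', hD⟩ := exists_rank_sub_le_deltaRho ρ hnN X X'
  obtain ⟨E, hE, hDE⟩ := (A' * X' - A * X).exists_rank_le_and_rank_sub_le i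
  have hX : discRho ρ X (A * X + E) ≤ i :=
    (discRho_le_rank ρ X _ hA).trans (by rwa [add_sub_cancel_left])
  have hX' : discRho ρ X' (A * X + E) ≤ deltaRho (N := N) ρ X X' - i := by
    refine (discRho_le_rank ρ X' _ hA').trans ?_
    rw [show A * X + E - A' * X' = -(A' * X' - A * X - E) by abel, Matrix.rank_neg]
    omega
  have hsum := deltaRho_le_add ρ X X' (A * X + E)
  exact ⟨A * X + E, by omega, by omega⟩

/-- The noncoherent discrepancy function `Δ_ρ` is normal: for all `X, X'` and
every `0 ≤ i ≤ δ_ρ(X,X')` there is a `Y` with `Δ_ρ(X,Y) = i` and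
`Δ_ρ(X',Y) = δ_ρ(X,X') − i`. -/
theorem discRho_isNormal {K : Type*} [Field K] [Fintype K] {n m N : ℕ}
    (hn : 0 < n) (hm : 0 < m) (hN : 0 < N) (hnN : n ≤ N) (ρ : ℕ)
    (X X' : Matrix (Fin n) (Fin m) K) (i : ℕ)
    (hi : i ≤ deltaRho (N := N) ρ X X') :
    ∃ Y : Matrix (Fin N) (Fin m) K,
      discRho ρ X Y = i ∧ discRho ρ X' Y = deltaRho (N := N) ρ X X' - i :=
  discRho_isNormal_general hnN ρ X X' i hi
end

section
/- Let ρ ∈ ℕ with N ≥ n − ρ. Then for all X, X' ∈ 𝔽_q^{n×m}, the Δ-distance induced by the noncoherent discrepancy satisfies δ_ρ(X,X') = [d_I(⟨X⟩, ⟨X'⟩) − ρ]⁺. -/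
/-- The row space of a matrix: the span of its rows in `𝔽_q^m`. -/
noncomputable def rowSpace {K : Type*} [Field K] {a b : ℕ}
    (X : Matrix (Fin a) (Fin b) K) : Submodule K (Fin b → K) :=
  Submodule.span K (Set.range fun i => X i)

/-- The injection distance between two subspaces of `𝔽_q^m`:
`d_I(U,V) = max {dim U, dim V} − dim (U ∩ V)`. -/
noncomputable def injDist {K : Type*} [Field K] {m : ℕ}
    (U V : Submodule K (Fin m → K)) : ℕ :=
  max (Module.finrank K U) (Module.finrank K V) - Module.finrank K ↥(U ⊓ V)

/-!
Write `U = ⟨X⟩`, `V = ⟨X'⟩`, `u, v, d` for the dimensions of `U, V, U ∩ V`. By Sylvester's rank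
inequality, `rank A ≥ n − ρ` forces `dim ⟨AX⟩ ≥ u − ρ`. Lower bound: `⟨AX⟩ ⊆ U` lies in
`V + ⟨Y − A'X'⟩ + ⟨Y − AX⟩`, so `u − ρ ≤ d + rank (Y − AX) + rank (Y − A'X')`, and symmetrically
for `v`. Upper bound (say `v ≤ u`): take bases of `U` and `V` extending a common basis of `U ∩ V`,
let `AX` list the first `u − ρ` vectors of the basis of `U` and `Y = A'X'` the first
`max (min d (u − ρ)) (v − ρ)` vectors of the basis of `V`. The two agree on the common prefix,
so `Y − AX` has at most `[u − d − ρ]⁺` nonzero rows. Such an `A` exists because independent rows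
in `⟨X⟩` lift through `X`, and appending a basis of the left kernel of `X` raises `rank A` to
`n − ρ`.
-/

open Submodule Module Matrix

section Subspaces

variable {K V W : Type*} [Field K] [AddCommGroup V] [Module K V] [AddCommGroup W] [Module K W]

lemma finrank_le_finrank_map_add_finrank_ker [FiniteDimensional K V] (f : V →ₗ[K] W)
    (p : Submodule K V) :
    finrank K p ≤ finrank K (p.map f) + finrank K (LinearMap.ker f) := by
  have h := LinearMap.finrank_range_add_finrank_ker (f.domRestrict p)
  rw [LinearMap.range_domRestrict, LinearMap.ker_domRestrict,
    ← finrank_map_subtype_eq, map_comap_subtype] at h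
  have := finrank_mono (inf_le_right : p ⊓ LinearMap.ker f ≤ _)
  omega

lemma finrank_le_finrank_inf_add_of_le_sup [FiniteDimensional K V] {S U F : Submodule K V}
    (h : S ≤ U ⊔ F) : finrank K S ≤ finrank K ↥(S ⊓ U) + finrank K F := by
  have h1 := finrank_sup_add_finrank_inf_eq S U
  have h2 := finrank_mono (sup_le h le_sup_left)
  have h3 := finrank_add_le_finrank_add_finrank U F
  omega

lemma disjoint_span_ker_of_linearIndependent_comp {ι : Type*} {v : ι → V} (f : V →ₗ[K] W)
    (hfv : LinearIndependent K (f ∘ v)) :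
    Disjoint (span K (Set.range v)) (LinearMap.ker f) := by
  rw [disjoint_iff_inf_le]
  rintro x ⟨hx, hfx⟩
  rw [← Finsupp.range_linearCombination] at hx
  obtain ⟨l, rfl⟩ := hx
  have hl : Finsupp.linearCombination K (f ∘ v) l = 0 := by
    rw [← Finsupp.apply_linearCombination]
    exact hfx
  rw [linearIndependent_iff.mp hfv l hl, map_zero]
  exact zero_mem _

end Subspaces

section RowSpace

variable {K : Type*} [Field K] {a b c : ℕ}

lemma rowSpace_eq_range_vecMulLinear (X : Matrix (Fin a) (Fin b) K) :
    rowSpace X = LinearMap.range X.vecMulLinear :=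
  (range_vecMulLinear X).symm

lemma rank_eq_finrank_rowSpace (X : Matrix (Fin a) (Fin b) K) :
    X.rank = finrank K (rowSpace X) :=
  rank_eq_finrank_span_row X

lemma rowSpace_mul (A : Matrix (Fin c) (Fin a) K) (X : Matrix (Fin a) (Fin b) K) :
    rowSpace (A * X) = (rowSpace A).map X.vecMulLinear := by
  rw [rowSpace, rowSpace, map_span, ← Set.range_comp]
  rfl

lemma rowSpace_mul_le (A : Matrix (Fin c) (Fin a) K) (X : Matrix (Fin a) (Fin b) K) :
    rowSpace (A * X) ≤ rowSpace X := by
  rw [rowSpace_mul, rowSpace_eq_range_vecMulLinear X]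
  exact LinearMap.map_le_range

lemma rowSpace_add_le (P Q : Matrix (Fin a) (Fin b) K) :
    rowSpace (P + Q) ≤ rowSpace P ⊔ rowSpace Q :=
  span_le.2 fun _ ⟨i, hi⟩ => hi ▸ add_mem_sup (subset_span ⟨i, rfl⟩) (subset_span ⟨i, rfl⟩)

lemma rowSpace_sub_le (P Q : Matrix (Fin a) (Fin b) K) :
    rowSpace (P - Q) ≤ rowSpace P ⊔ rowSpace Q :=
  span_le.2 fun _ ⟨i, hi⟩ => hi ▸ sub_mem_sup (subset_span ⟨i, rfl⟩) (subset_span ⟨i, rfl⟩)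

lemma rank_add_rank_le_add_rank_mul (A : Matrix (Fin c) (Fin a) K) (X : Matrix (Fin a) (Fin b) K) :
    X.rank + A.rank ≤ a + (A * X).rank := by
  have h1 := finrank_le_finrank_map_add_finrank_ker X.vecMulLinear (rowSpace A)
  have h2 := LinearMap.finrank_range_add_finrank_ker X.vecMulLinear
  rw [← rowSpace_mul] at h1
  rw [← rowSpace_eq_range_vecMulLinear, finrank_fin_fun] at h2
  simp only [rank_eq_finrank_rowSpace]
  omega

end RowSpace


section LowerBound

variable {K : Type*} [Field K] {n m N : ℕ}

lemma finrank_rowSpace_le_finrank_inf_add_rank_sub (ρ : ℕ) (X X' : Matrix (Fin n) (Fin m) K)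
    (Y : Matrix (Fin N) (Fin m) K) (A A' : Matrix (Fin N) (Fin n) K) (hA : n - ρ ≤ A.rank) :
    finrank K (rowSpace X) ≤ finrank K ↥(rowSpace X ⊓ rowSpace X')
      + (Y - A * X).rank + (Y - A' * X').rank + ρ := by
  simp only [rank_eq_finrank_rowSpace] at hA ⊢
  have hsylv := rank_add_rank_le_add_rank_mul A X
  have hXn := rank_le_height X
  have hcover : rowSpace (A * X) ≤
      rowSpace X' ⊔ (rowSpace (Y - A' * X') ⊔ rowSpace (Y - A * X)) := by
    calc rowSpace (A * X)
        = rowSpace (A' * X' + (Y - A' * X') - (Y - A * X)) := congrArg rowSpace (by abel)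
      _ ≤ rowSpace (A' * X') ⊔ rowSpace (Y - A' * X') ⊔ rowSpace (Y - A * X) :=
          (rowSpace_sub_le _ _).trans (sup_le_sup_right (rowSpace_add_le _ _) _)
      _ ≤ rowSpace X' ⊔ rowSpace (Y - A' * X') ⊔ rowSpace (Y - A * X) := by
          gcongr; exact rowSpace_mul_le A' X'
      _ = _ := sup_assoc _ _ _
  have h1 := finrank_le_finrank_inf_add_of_le_sup hcover
  have h2 := finrank_mono (inf_le_inf_right (rowSpace X') (rowSpace_mul_le A X))
  have h3 := finrank_add_le_finrank_add_finrank (rowSpace (Y - A' * X')) (rowSpace (Y - A * X))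
  simp only [rank_eq_finrank_rowSpace] at hsylv hXn
  omega

lemma injDist_le_rank_sub_add_rank_sub (ρ : ℕ) (X X' : Matrix (Fin n) (Fin m) K)
    (Y : Matrix (Fin N) (Fin m) K) {A A' : Matrix (Fin N) (Fin n) K}
    (hA : n - ρ ≤ A.rank) (hA' : n - ρ ≤ A'.rank) :
    injDist (rowSpace X) (rowSpace X') ≤ (Y - A * X).rank + (Y - A' * X').rank + ρ := by
  have h := finrank_rowSpace_le_finrank_inf_add_rank_sub ρ X X' Y A A' hA
  have h' := finrank_rowSpace_le_finrank_inf_add_rank_sub ρ X' X Y A' A hA'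
  rw [inf_comm] at h'
  unfold injDist
  omega

end LowerBound

section Sequences

variable {K M : Type*} [Field K] [AddCommGroup M] [Module K M]

def seqAppend (a : ℕ → M) (d : ℕ) (b : ℕ → M) : ℕ → M :=
  fun i => if i < d then a i else b (i - d)

lemma linearIndependent_seqAppend {a b : ℕ → M} {d k : ℕ}
    (ha : LinearIndependent K fun i : Fin d => a i) (hb : LinearIndependent K fun j : Fin k => b j)
    (hab : Disjoint (span K (Set.range fun i : Fin d => a i))
      (span K (Set.range fun j : Fin k => b j))) :
    LinearIndependent K fun i : Fin (d + k) => seqAppend a d b i := by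
  have h : (fun i : Fin (d + k) => seqAppend a d b i) =
      Sum.elim (fun i : Fin d => a i) (fun j : Fin k => b j) ∘ finSumFinEquiv.symm := by
    funext i
    refine Fin.addCases (fun i => ?_) (fun j => ?_) i <;> simp [seqAppend]
  rw [h]
  exact (ha.sum_type hb hab).comp _ finSumFinEquiv.symm.injective

lemma exists_seq_basis (W : Submodule K M) [FiniteDimensional K W] :
    ∃ b : ℕ → M, (LinearIndependent K fun j : Fin (finrank K W) => b j) ∧
      span K (Set.range fun j : Fin (finrank K W) => b j) = W := by
  let B := Module.finBasis K W
  refine ⟨fun j => if h : j < finrank K W then (B ⟨j, h⟩ : M) else 0, ?_⟩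
  have hb : (fun j : Fin (finrank K W) =>
      if h : (j : ℕ) < finrank K W then (B ⟨j, h⟩ : M) else 0) = W.subtype ∘ B := by
    funext j
    simp
  rw [hb, Set.range_comp, span_image, B.span_eq, Submodule.map_top, range_subtype]
  exact ⟨B.linearIndependent.map' W.subtype W.ker_subtype, rfl⟩

lemma exists_seqAppend_basis [FiniteDimensional K M] {I U : Submodule K M} (hIU : I ≤ U)
    {a : ℕ → M} (ha : LinearIndependent K fun i : Fin (finrank K I) => a i)
    (haI : span K (Set.range fun i : Fin (finrank K I) => a i) = I) :
    ∃ b : ℕ → M, (LinearIndependent K fun i : Fin (finrank K U) => seqAppend a (finrank K I) b i) ∧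
      ∀ i < finrank K U, seqAppend a (finrank K I) b i ∈ U := by
  obtain ⟨C, hC⟩ := Submodule.exists_isCompl I
  obtain ⟨b, hb, hbU⟩ := exists_seq_basis (C ⊓ U)
  have hsup : I ⊔ C ⊓ U = U := by rw [← sup_inf_assoc_of_le C hIU, hC.sup_eq_top, top_inf_eq]
  have hdisj : Disjoint I (C ⊓ U) := hC.disjoint.mono_right inf_le_left
  have hdim : finrank K I + finrank K ↥(C ⊓ U) = finrank K U := by
    have := finrank_sup_add_finrank_inf_eq I (C ⊓ U)
    rwa [hsup, hdisj.eq_bot, finrank_bot, add_zero, eq_comm] at this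
  refine ⟨b, ?_, fun i hi => ?_⟩
  · rw [← hdim]
    exact linearIndependent_seqAppend ha hb (by rwa [haI, hbU])
  · unfold seqAppend
    split_ifs with h
    · exact hIU (haI ▸ subset_span ⟨⟨i, h⟩, rfl⟩)
    · have hb' : b (i - finrank K I) ∈ C ⊓ U := hbU ▸ subset_span ⟨⟨_, by omega⟩, rfl⟩
      exact hb'.2

end Sequences

section StackRows

variable {K : Type*} [Field K] {n m N : ℕ}

def stackRows (N : ℕ) (e : ℕ → Fin m → K) (k : ℕ) : Matrix (Fin N) (Fin m) K :=
  Matrix.of fun i => if (i : ℕ) < k then e i else 0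

lemma stackRows_mul (c : ℕ → Fin n → K) (k : ℕ) (X : Matrix (Fin n) (Fin m) K) :
    stackRows N c k * X = stackRows N (fun i => c i ᵥ* X) k := by
  ext i j
  by_cases h : (i : ℕ) < k <;> simp [stackRows, h, Matrix.mul_apply, vecMul, dotProduct]

lemma min_le_rank_stackRows {e : ℕ → Fin m → K} {k : ℕ}
    (he : LinearIndependent K fun i : Fin k => e i) : min N k ≤ (stackRows N e k).rank := by
  let r : Fin (min N k) → Fin N := Fin.castLE (min_le_left N k)
  have hrows : ((stackRows N e k).submatrix r id).row =
      fun i : Fin (min N k) => e i := by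
    funext i j
    simp [stackRows, r, Matrix.row, lt_of_lt_of_le i.2 (min_le_right N k)]
  have hli : LinearIndependent K ((stackRows N e k).submatrix r id).row := by
    rw [hrows]
    exact he.comp (Fin.castLE (min_le_right N k)) (Fin.castLE_injective _)
  simpa [hli.rank_matrix] using rank_submatrix_le (stackRows N e k) r id

lemma rank_stackRows_sub_stackRows_le {e f : ℕ → Fin m → K} {p l k : ℕ}
    (hef : ∀ i < p, e i = f i) (hpl : p ≤ l) (hlk : l ≤ k) :
    (stackRows N f l - stackRows N e k).rank ≤ k - p := by
  classical
  let S : Finset (Fin N) := Finset.univ.filter fun i => p ≤ (i : ℕ) ∧ (i : ℕ) < k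
  refine (rank_le_card_of_support_subset _ S fun i hi => ?_).trans ?_
  · by_contra hiS
    apply hi
    funext j
    simp only [S, Finset.coe_filter, Finset.mem_univ, true_and, Set.mem_ofPred_eq, not_and_or,
      not_le, not_lt] at hiS
    rcases hiS with hip | hki
    · simp [stackRows, Matrix.row, hip.trans_le hpl, hip.trans_le (hpl.trans hlk), hef i hip]
    · simp [stackRows, Matrix.row, (hlk.trans hki).not_gt, hki.not_gt]
  · calc S.card ≤ (Finset.Ico p k).card :=
          Finset.card_le_card_of_injOn Fin.val (fun i hi => by simpa [S] using hi)
            Fin.val_injective.injOn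
      _ = k - p := Nat.card_Ico p k

lemma exists_mul_eq_stackRows (X : Matrix (Fin n) (Fin m) K) {e : ℕ → Fin m → K} {k : ℕ}
    (he : LinearIndependent K fun i : Fin k => e i) (heX : ∀ i < k, e i ∈ rowSpace X) :
    ∃ A : Matrix (Fin N) (Fin n) K,
      A * X = stackRows N e k ∧ min N (k + (n - X.rank)) ≤ A.rank := by
  have hlift : ∀ i, ∃ c : Fin n → K, i < k → c ᵥ* X = e i := fun i => by
    by_cases hi : i < k
    · obtain ⟨c, hc⟩ := (rowSpace_eq_range_vecMulLinear X ▸ heX i hi : e i ∈ _)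
      exact ⟨c, fun _ => hc⟩
    · exact ⟨0, fun h => absurd h hi⟩
  choose c hc using hlift
  obtain ⟨κ, hκ, hκspan⟩ := exists_seq_basis (LinearMap.ker X.vecMulLinear)
  have hnullity : X.rank + finrank K (LinearMap.ker X.vecMulLinear) = n := by
    rw [rank_eq_finrank_rowSpace, rowSpace_eq_range_vecMulLinear,
      LinearMap.finrank_range_add_finrank_ker, finrank_fin_fun]
  have hce : (X.vecMulLinear ∘ fun i : Fin k => c i) = fun i : Fin k => e i :=
    funext fun i => hc i i.2
  refine ⟨stackRows N (seqAppend c k κ) (k + finrank K (LinearMap.ker X.vecMulLinear)), ?_, ?_⟩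
  · rw [stackRows_mul]
    ext i : 1
    by_cases hik : (i : ℕ) < k
    · simp [stackRows, seqAppend, hik, hc _ hik, Nat.lt_add_right _ hik]
    by_cases hit : (i : ℕ) < k + finrank K (LinearMap.ker X.vecMulLinear)
    · have hκi : κ (i - k) ∈ LinearMap.ker X.vecMulLinear :=
        hκspan ▸ subset_span ⟨⟨i - k, by omega⟩, rfl⟩
      simp only [LinearMap.mem_ker, vecMulLinear_apply] at hκi
      simp [stackRows, seqAppend, hik, hit, hκi]
    · simp [stackRows, hik, hit]
  · have hli := linearIndependent_seqAppend (LinearIndependent.of_comp _ (hce ▸ he)) hκ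
      (by rw [hκspan]; exact disjoint_span_ker_of_linearIndependent_comp _ (hce ▸ he))
    have := min_le_rank_stackRows (N := N) hli
    omega

lemma exists_min_le_rank : ∃ A : Matrix (Fin N) (Fin n) K, min N n ≤ A.rank := by
  let e : ℕ → Fin n → K := fun i => if h : i < n then Pi.single ⟨i, h⟩ 1 else 0
  have he : (fun i : Fin n => e i) = Pi.basisFun K (Fin n) := by
    funext i
    simp [e]
  exact ⟨stackRows N e n, min_le_rank_stackRows (he ▸ (Pi.basisFun K (Fin n)).linearIndependent)⟩

end StackRows

section Discrepancy

variable {K : Type*} [Field K] [Fintype K] {n m N : ℕ}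

lemma exists_discRho_eq {ρ : ℕ} (hNρ : n - ρ ≤ N) (X : Matrix (Fin n) (Fin m) K)
    (Y : Matrix (Fin N) (Fin m) K) :
    ∃ A : Matrix (Fin N) (Fin n) K, n - ρ ≤ A.rank ∧ discRho ρ X Y = (Y - A * X).rank := by
  obtain ⟨A, hA⟩ := exists_min_le_rank (K := K) (N := N) (n := n)
  have hne : {r | ∃ A : Matrix (Fin N) (Fin n) K, n - ρ ≤ A.rank ∧ r = (Y - A * X).rank}.Nonempty :=
    ⟨_, A, by omega, rfl⟩
  exact Nat.sInf_mem hne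

lemma exists_deltaRho_eq (ρ : ℕ) (X X' : Matrix (Fin n) (Fin m) K) :
    ∃ Y : Matrix (Fin N) (Fin m) K, deltaRho (N := N) ρ X X' = discRho ρ X Y + discRho ρ X' Y :=
  Nat.sInf_mem (s := {e | ∃ Y : Matrix (Fin N) (Fin m) K, e = discRho ρ X Y + discRho ρ X' Y})
    ⟨_, 0, rfl⟩

lemma deltaRho_le (ρ : ℕ) (X X' : Matrix (Fin n) (Fin m) K) (Y : Matrix (Fin N) (Fin m) K) :
    deltaRho (N := N) ρ X X' ≤ discRho ρ X Y + discRho ρ X' Y :=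
  Nat.sInf_le ⟨Y, rfl⟩

lemma deltaRho_comm (ρ : ℕ) (X X' : Matrix (Fin n) (Fin m) K) :
    deltaRho (N := N) ρ X X' = deltaRho (N := N) ρ X' X := by
  simp only [deltaRho]
  simp_rw [add_comm (discRho ρ X _)]

lemma discRho_le_rank_sub_stackRows {ρ : ℕ} (hNρ : n - ρ ≤ N) (X : Matrix (Fin n) (Fin m) K)
    (Y : Matrix (Fin N) (Fin m) K) {e : ℕ → Fin m → K} {k : ℕ}
    (he : LinearIndependent K fun i : Fin k => e i) (heX : ∀ i < k, e i ∈ rowSpace X)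
    (hk : X.rank ≤ k + ρ) :
    discRho ρ X Y ≤ (Y - stackRows N e k).rank := by
  obtain ⟨A, hAX, hA⟩ := exists_mul_eq_stackRows (N := N) X he heX
  have := rank_le_height X
  exact Nat.sInf_le ⟨A, by omega, by rw [hAX]⟩

lemma le_deltaRho {ρ : ℕ} (hNρ : n - ρ ≤ N) (X X' : Matrix (Fin n) (Fin m) K) :
    injDist (rowSpace X) (rowSpace X') - ρ ≤ deltaRho (N := N) ρ X X' := by
  obtain ⟨Y, hY⟩ := exists_deltaRho_eq (N := N) ρ X X'
  obtain ⟨A, hA, hAY⟩ := exists_discRho_eq hNρ X Y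
  obtain ⟨A', hA', hA'Y⟩ := exists_discRho_eq hNρ X' Y
  have := injDist_le_rank_sub_add_rank_sub ρ X X' Y hA hA'
  omega

lemma deltaRho_le_of_finrank_le {ρ : ℕ} (hNρ : n - ρ ≤ N) (X X' : Matrix (Fin n) (Fin m) K)
    (hVU : finrank K (rowSpace X') ≤ finrank K (rowSpace X)) :
    deltaRho (N := N) ρ X X' ≤ injDist (rowSpace X) (rowSpace X') - ρ := by
  obtain ⟨a, ha, haI⟩ := exists_seq_basis (rowSpace X ⊓ rowSpace X')
  obtain ⟨b, hb, hbU⟩ := exists_seqAppend_basis inf_le_left ha haI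
  obtain ⟨c, hc, hcV⟩ := exists_seqAppend_basis inf_le_right ha haI
  set d := finrank K ↥(rowSpace X ⊓ rowSpace X')
  set s := X.rank - ρ
  set p := min d s
  set w := max p (X'.rank - ρ)
  have hXU := rank_eq_finrank_rowSpace X
  have hX'V := rank_eq_finrank_rowSpace X'
  have hsU : s ≤ finrank K (rowSpace X) := by omega
  have hwV : w ≤ finrank K (rowSpace X') := by
    have := finrank_mono (inf_le_right : rowSpace X ⊓ rowSpace X' ≤ _)
    omega
  set Y := stackRows N (seqAppend a d c) w
  have hX'Y : discRho ρ X' Y = 0 := by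
    have := discRho_le_rank_sub_stackRows hNρ X' Y (k := w)
      (hc.comp (Fin.castLE hwV) (Fin.castLE_injective hwV))
      (fun i hi => hcV i (hi.trans_le hwV)) (by omega)
    rwa [sub_self, rank_zero, Nat.le_zero] at this
  have hXY : discRho ρ X Y ≤ s - p :=
    (discRho_le_rank_sub_stackRows hNρ X Y (k := s)
      (hb.comp (Fin.castLE hsU) (Fin.castLE_injective hsU))
      (fun i hi => hbU i (hi.trans_le hsU)) (by omega)).trans
    (rank_stackRows_sub_stackRows_le
      (fun i hi => by simp [seqAppend, hi.trans_le (min_le_left d s)]) (le_max_left _ _)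
      (by omega))
  have := deltaRho_le ρ X X' Y
  unfold injDist
  omega

end Discrepancy

lemma injDist_comm {K : Type*} [Field K] {m : ℕ} (U V : Submodule K (Fin m → K)) :
    injDist U V = injDist V U := by
  rw [injDist, injDist, max_comm, inf_comm]

/-- Truncated subtraction in `ℕ` is the positive part `[·]⁺`. -/
theorem deltaRho_eq_injDist_general {K : Type*} [Field K] [Fintype K] {n m N : ℕ}
    (ρ : ℕ) (hNρ : n - ρ ≤ N)
    (X X' : Matrix (Fin n) (Fin m) K) :
    deltaRho (N := N) ρ X X' = injDist (rowSpace X) (rowSpace X') - ρ := by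
  refine le_antisymm ?_ (le_deltaRho hNρ X X')
  rcases le_total (finrank K (rowSpace X')) (finrank K (rowSpace X)) with h | h
  · exact deltaRho_le_of_finrank_le hNρ X X' h
  · rw [deltaRho_comm, injDist_comm]
    exact deltaRho_le_of_finrank_le hNρ X' X h

/-- For `N ≥ n − ρ`, `δ_ρ(X,X') = [d_I(⟨X⟩,⟨X'⟩) − ρ]⁺` (the truncated
natural-number subtraction is exactly the positive part). -/
theorem deltaRho_eq_injDist {K : Type*} [Field K] [Fintype K] {n m N : ℕ}
    (hn : 0 < n) (hm : 0 < m) (hN : 0 < N) (ρ : ℕ) (hNρ : n - ρ ≤ N)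
    (X X' : Matrix (Fin n) (Fin m) K) :
    deltaRho (N := N) ρ X X' = injDist (rowSpace X) (rowSpace X') - ρ :=
  deltaRho_eq_injDist_general ρ hNρ X X'
end

section
/- Suppose the discrepancy function Δ of an adversarial channel is normal, let t ∈ ℕ, and let 𝒞 ⊆ 𝒳 be a code with at least two codewords such that t ≤ δ(𝒞). Then the discrepancy-detection capability satisfies σ^t(𝒞) = δ(𝒞) − t − 1, where σ^t(𝒞) = min over pairs of distinct codewords x, x' ∈ 𝒞 of σ^t(x,x'). -/
/-- The Δ-distance `δ(x,x') = min_y (Δ(x,y) + Δ(x',y))`. -/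
noncomputable def deltaPair {𝒳 𝒴 : Type*} (Δ : 𝒳 → 𝒴 → ℕ) (x x' : 𝒳) : ℕ :=
  sInf {e : ℕ | ∃ y : 𝒴, e = Δ x y + Δ x' y}

/-- `δ(𝒞)`: the minimum Δ-distance over pairs of distinct codewords. -/
noncomputable def deltaCode {𝒳 𝒴 : Type*} (Δ : 𝒳 → 𝒴 → ℕ) (C : Set 𝒳) : ℕ :=
  sInf {e : ℕ | ∃ x ∈ C, ∃ x' ∈ C, x ≠ x' ∧ e = deltaPair Δ x x'}

/-- A discrepancy function `Δ` is normal if for all `x, x'` and all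
`0 ≤ i ≤ δ(x,x')` there is an output `y` with `Δ(x,y) = i` and
`Δ(x',y) = δ(x,x') − i`. -/
def IsNormal {𝒳 𝒴 : Type*} (Δ : 𝒳 → 𝒴 → ℕ) : Prop :=
  ∀ x x' : 𝒳, ∀ i : ℕ, i ≤ deltaPair Δ x x' →
    ∃ y : 𝒴, Δ x y = i ∧ Δ x' y = deltaPair Δ x x' - i

/-- `σ^t(x,x') + 1 = min { Δ(x,y) : y ∈ 𝒴, Δ(x',y) ≤ t }`. -/
noncomputable def sigmaPairSucc {𝒳 𝒴 : Type*} (Δ : 𝒳 → 𝒴 → ℕ) (t : ℕ) (x x' : 𝒳) : ℕ :=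
  sInf {e : ℕ | ∃ y : 𝒴, Δ x' y ≤ t ∧ e = Δ x y}

/-- `σ^t(𝒞) = (min over distinct pairs of codewords of (σ^t(x,x')+1)) − 1`,
as an integer; this is the minimum of `σ^t(x,x')` over distinct pairs. -/
noncomputable def sigmaCode {𝒳 𝒴 : Type*} (Δ : 𝒳 → 𝒴 → ℕ) (t : ℕ) (C : Set 𝒳) : ℤ :=
  ((sInf {e : ℕ | ∃ x ∈ C, ∃ x' ∈ C, x ≠ x' ∧ e = sigmaPairSucc Δ t x x'} : ℕ) : ℤ) - 1

/-!
Normality provides an output `y` with `Δ(x',y) = t` and `Δ(x,y) = δ(x,x') − t`, while any `y` with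
`Δ(x',y) ≤ t` has `Δ(x,y) ≥ δ(x,x') − Δ(x',y) ≥ δ(x,x') − t`; so `σ^t(x,x') + 1 = δ(x,x') − t` for every
pair of distinct codewords. Minimising over the pairs commutes with the monotone map `n ↦ n − t`.
-/

section

variable {𝒳 𝒴 : Type*}

def distinctPairValues (C : Set 𝒳) (f : 𝒳 → 𝒳 → ℕ) : Set ℕ :=
  {e | ∃ x ∈ C, ∃ x' ∈ C, x ≠ x' ∧ e = f x x'}

lemma distinctPairValues_nonempty {C : Set 𝒳} (hC : ∃ x ∈ C, ∃ x' ∈ C, x ≠ x')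
    (f : 𝒳 → 𝒳 → ℕ) : (distinctPairValues C f).Nonempty :=
  let ⟨x, hx, x', hx', hne⟩ := hC
  ⟨f x x', x, hx, x', hx', hne, rfl⟩

lemma distinctPairValues_eq_image {C : Set 𝒳} {f g : 𝒳 → 𝒳 → ℕ} {φ : ℕ → ℕ}
    (h : ∀ x ∈ C, ∀ x' ∈ C, x ≠ x' → f x x' = φ (g x x')) :
    distinctPairValues C f = φ '' distinctPairValues C g := by
  ext e
  constructor
  · rintro ⟨x, hx, x', hx', hne, rfl⟩
    exact ⟨g x x', ⟨x, hx, x', hx', hne, rfl⟩, (h x hx x' hx' hne).symm⟩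
  · rintro ⟨_, ⟨x, hx, x', hx', hne, rfl⟩, rfl⟩
    exact ⟨x, hx, x', hx', hne, (h x hx x' hx' hne).symm⟩

lemma deltaCode_eq_sInf (Δ : 𝒳 → 𝒴 → ℕ) (C : Set 𝒳) :
    deltaCode Δ C = sInf (distinctPairValues C (deltaPair Δ)) :=
  rfl

lemma sigmaCode_eq_sInf_sub_one (Δ : 𝒳 → 𝒴 → ℕ) (t : ℕ) (C : Set 𝒳) :
    sigmaCode Δ t C = ((sInf (distinctPairValues C (sigmaPairSucc Δ t)) : ℕ) : ℤ) - 1 :=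
  rfl

lemma deltaCode_le_deltaPair {Δ : 𝒳 → 𝒴 → ℕ} {C : Set 𝒳} {x x' : 𝒳} (hx : x ∈ C)
    (hx' : x' ∈ C) (hne : x ≠ x') : deltaCode Δ C ≤ deltaPair Δ x x' :=
  Nat.sInf_le ⟨x, hx, x', hx', hne, rfl⟩

lemma deltaPair_le_add (Δ : 𝒳 → 𝒴 → ℕ) (x x' : 𝒳) (y : 𝒴) :
    deltaPair Δ x x' ≤ Δ x y + Δ x' y :=
  Nat.sInf_le ⟨y, rfl⟩

lemma sigmaPairSucc_eq_of_isNormal {Δ : 𝒳 → 𝒴 → ℕ} (hΔ : IsNormal Δ) {t : ℕ} {x x' : 𝒳}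
    (ht : t ≤ deltaPair Δ x x') : sigmaPairSucc Δ t x x' = deltaPair Δ x x' - t := by
  obtain ⟨y, hxy, hx'y⟩ := hΔ x x' (deltaPair Δ x x' - t) (Nat.sub_le _ _)
  refine le_antisymm (Nat.sInf_le ⟨y, by omega, hxy.symm⟩) (le_csInf ⟨_, y, by omega, rfl⟩ ?_)
  rintro _ ⟨z, hz, rfl⟩
  have := deltaPair_le_add Δ x x' z
  omega

end

theorem sigmaCode_eq_general {𝒳 𝒴 : Type*} (Δ : 𝒳 → 𝒴 → ℕ) (hΔ : IsNormal Δ) (t : ℕ)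
    (C : Set 𝒳) (hC : ∃ x ∈ C, ∃ x' ∈ C, x ≠ x') (ht : t ≤ deltaCode Δ C) :
    sigmaCode Δ t C = (deltaCode Δ C : ℤ) - t - 1 := by
  have hpair : ∀ x ∈ C, ∀ x' ∈ C, x ≠ x' → sigmaPairSucc Δ t x x' = deltaPair Δ x x' - t :=
    fun _ hx _ hx' hne =>
      sigmaPairSucc_eq_of_isNormal hΔ (ht.trans (deltaCode_le_deltaPair hx hx' hne))
  have hmin : sInf (distinctPairValues C (sigmaPairSucc Δ t)) = deltaCode Δ C - t := by
    rw [distinctPairValues_eq_image (φ := (· - t)) hpair, deltaCode_eq_sInf,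
      Monotone.map_csInf (fun _ _ h => Nat.sub_le_sub_right h t) (distinctPairValues_nonempty hC _)]
  rw [sigmaCode_eq_sInf_sub_one, hmin, Nat.cast_sub ht]

/-- If `Δ` is normal, `t ∈ ℕ` and `𝒞` has at least two codewords with
`t ≤ δ(𝒞)`, then the detection capability satisfies
`σ^t(𝒞) = δ(𝒞) − t − 1`. -/
theorem sigmaCode_eq {𝒳 𝒴 : Type*} [Fintype 𝒳] [Fintype 𝒴]
    [Nonempty 𝒳] [Nonempty 𝒴] (Δ : 𝒳 → 𝒴 → ℕ) (hΔ : IsNormal Δ) (t : ℕ)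
    (C : Set 𝒳) (hC : ∃ x ∈ C, ∃ x' ∈ C, x ≠ x') (ht : t ≤ deltaCode Δ C) :
    sigmaCode Δ t C = (deltaCode Δ C : ℤ) - t - 1 :=
  sigmaCode_eq_general Δ hΔ t C hC ht
end
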